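/- Let f(v) denote the weight of the minimum-weight tree in a weighted undirected graph that spans a set of k terminal vertices. The greedy procedure that repeatedly attaches the nearest uncovered terminal to the current tree via a shortest path yields a tree of weight at most (2 − 2/k) times f(v), assuming k ≥ 2 and nonnegative edge weights. -/

import Mathlib

/-!
Let `S` be a cheapest connected subgraph spanning the `k` terminals and `opt` its weight.
Walking around `S` and traversing every edge twice gives a closed walk from `t₀` through all
terminals of weight at most `2 * opt`. Shortcutting it with the triangle inequality for the
walk distance visits the terminals in a cyclic order whose `k` legs sum to at most `2 * opt`;
dropping the longest leg leaves a path through all terminals of length at most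
`(1 - 1 / k) * 2 * opt`.

The greedy tree weighs at most the sum of its attaching walks. At step `i`, a leg of the path
with exactly one endpoint already covered is a walk from an uncovered terminal to the tree, so it
is no shorter than the greedy walk. Hall's theorem assigns distinct such legs to the steps: for a
set `s` of steps, the number of steps of `s` taken before a terminal is covered takes at least
`#s + 1` values along the path, and it changes only across legs crossing at a step of `s`.
-/

open scoped Classical

/-- Weight of a walk: sum of the weights of its edges. -/
noncomputable def walkWeight {V : Type*} {G : SimpleGraph V} (w : Sym2 V → ℝ)
    {a b : V} (p : G.Walk a b) : ℝ :=
  (p.edges.map w).sum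

/-- Weight of a subgraph: sum of the weights of its edges. -/
noncomputable def subgraphWeight {V : Type*} [Fintype V] [DecidableEq V]
    {G : SimpleGraph V} (w : Sym2 V → ℝ) (H : G.Subgraph) : ℝ :=
  ∑ e ∈ Finset.univ.filter (fun e : Sym2 V => e ∈ H.edgeSet), w e

open SimpleGraph Finset

section

variable {V : Type*} {G : SimpleGraph V} {w : Sym2 V → ℝ}

@[simp] lemma walkWeight_nil {a : V} : walkWeight w (Walk.nil : G.Walk a a) = 0 := by
  simp [walkWeight]

@[simp] lemma walkWeight_cons {a b c : V} (h : G.Adj a b) (p : G.Walk b c) :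
    walkWeight w (Walk.cons h p) = w s(a, b) + walkWeight w p := by
  simp [walkWeight]

@[simp] lemma walkWeight_append {a b c : V} (p : G.Walk a b) (q : G.Walk b c) :
    walkWeight w (p.append q) = walkWeight w p + walkWeight w q := by
  simp [walkWeight]

@[simp] lemma walkWeight_reverse {a b : V} (p : G.Walk a b) :
    walkWeight w p.reverse = walkWeight w p := by
  simp [walkWeight, List.sum_reverse]

lemma walkWeight_nonneg (hw : ∀ e, 0 ≤ w e) {a b : V} (p : G.Walk a b) :
    0 ≤ walkWeight w p :=
  List.sum_nonneg (by simpa using fun e _ => hw e)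

-- `⨅` over an empty type is `0` in `ℝ`, so `walkDist` is `0` between mutually unreachable
-- vertices; this is why reachability hypotheses accompany it below.
noncomputable def walkDist (G : SimpleGraph V) (w : Sym2 V → ℝ) (x y : V) : ℝ :=
  ⨅ p : G.Walk x y, walkWeight w p

lemma walkDist_le (hw : ∀ e, 0 ≤ w e) {x y : V} (p : G.Walk x y) :
    walkDist G w x y ≤ walkWeight w p :=
  ciInf_le ⟨0, by rintro _ ⟨q, rfl⟩; exact walkWeight_nonneg hw q⟩ p

lemma le_walkDist {x y : V} (h : G.Reachable x y) {b : ℝ}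
    (hb : ∀ p : G.Walk x y, b ≤ walkWeight w p) : b ≤ walkDist G w x y :=
  have : Nonempty (G.Walk x y) := h
  le_ciInf hb

lemma walkDist_nonneg (hw : ∀ e, 0 ≤ w e) (x y : V) : 0 ≤ walkDist G w x y := by
  by_cases h : G.Reachable x y
  · exact le_walkDist h (walkWeight_nonneg hw)
  · have : IsEmpty (G.Walk x y) := not_nonempty_iff.mp h
    simp [walkDist]

lemma walkDist_triangle (hw : ∀ e, 0 ≤ w e) {x y z : V} (hxy : G.Reachable x y) :
    walkDist G w x z ≤ walkDist G w x y + walkDist G w y z := by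
  by_cases hyz : G.Reachable y z
  · suffices ∀ q : G.Walk y z, walkDist G w x z - walkDist G w x y ≤ walkWeight w q by
      linarith [le_walkDist hyz this]
    intro q
    suffices ∀ p : G.Walk x y, walkDist G w x z - walkWeight w q ≤ walkWeight w p by
      linarith [le_walkDist hxy this]
    intro p
    linarith [walkDist_le hw (p.append q), walkWeight_append (w := w) p q]
  · have : IsEmpty (G.Walk x z) := not_nonempty_iff.mp fun ⟨p⟩ => hyz (hxy.symm.trans ⟨p⟩)
    simp only [walkDist, Real.iInf_of_isEmpty]
    exact add_nonneg (walkDist_nonneg hw x y) (walkDist_nonneg hw y z)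

def pathCost (d : V → V → ℝ) : List V → ℝ
  | x :: y :: l => d x y + pathCost d (y :: l)
  | _ => 0

lemma pathCost_cons_cons (d : V → V → ℝ) (x y : V) (l : List V) :
    pathCost d (x :: y :: l) = d x y + pathCost d (y :: l) := rfl

lemma pathCost_eq_sum (d : V → V → ℝ) (a : V) :
    ∀ l : List V, pathCost d l = ∑ n ∈ range (l.length - 1), d (l.getD n a) (l.getD (n + 1) a)
  | [] | [_] => by simp [pathCost]
  | x :: y :: l => by
    rw [pathCost_cons_cons, pathCost_eq_sum d a (y :: l)]
    simp [sum_range_succ' _ (l.length), add_comm]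

lemma pathCost_support_append_le (hw : ∀ e, 0 ≤ w e) {a b : V} (p : G.Walk a b) :
    pathCost (walkDist G w) (p.support ++ [b]) ≤ walkWeight w p := by
  induction p with
  | nil => simpa [pathCost] using walkDist_le hw (Walk.nil : G.Walk _ _)
  | @cons a c b h q ih =>
    rw [Walk.support_cons, ← q.cons_tail_support, List.cons_append, List.cons_append,
      pathCost_cons_cons, walkWeight_cons]
    rw [← q.cons_tail_support, List.cons_append] at ih
    have := walkDist_le hw (Walk.cons h Walk.nil)
    simp only [walkWeight_cons, walkWeight_nil, add_zero] at this
    linarith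

lemma pathCost_le_of_sublist (hw : ∀ e, 0 ≤ w e) {l₁ l₂ : List V} (h : l₁.Sublist l₂) :
    ∀ {a : V} (b : V), (∀ x ∈ l₂, G.Reachable a x) →
      pathCost (walkDist G w) (a :: l₁ ++ [b]) ≤
        pathCost (walkDist G w) (a :: l₂ ++ [b]) := by
  induction h with
  | slnil => intros; rfl
  | @cons l₁ l₂ x _ ih =>
    intro a b ha
    have hax : G.Reachable a x := ha x List.mem_cons_self
    have := ih b fun y hy => hax.symm.trans (ha y (List.mem_cons_of_mem x hy))
    obtain ⟨y, m, hm⟩ : ∃ y m, l₁ ++ [b] = y :: m := List.exists_cons_of_ne_nil (by simp)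
    simp only [List.cons_append, hm, pathCost_cons_cons] at this ⊢
    linarith [walkDist_triangle hw (z := y) hax]
  | @cons_cons l₁ l₂ x _ ih =>
    intro a b ha
    have hax : G.Reachable a x := ha x List.mem_cons_self
    have := ih b fun y hy => hax.symm.trans (ha y (List.mem_cons_of_mem x hy))
    simp only [List.cons_append, pathCost_cons_cons] at this ⊢
    linarith

lemma fromEdgeSet_reachable_of_mem {s : Set (Sym2 V)} {a b : V} (h : s(a, b) ∈ s) :
    (fromEdgeSet s).Reachable a b := by
  by_cases hab : a = b
  · exact hab ▸ Reachable.refl a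
  · exact Adj.reachable ((fromEdgeSet_adj s).mpr ⟨h, hab⟩)

lemma SimpleGraph.Reachable.fromEdgeSet_induction {s : Set (Sym2 V)} {P : V → Prop}
    (hP : ∀ a b, s(a, b) ∈ s → P a → P b) {a x : V} (h : (fromEdgeSet s).Reachable a x)
    (ha : P a) : P x := by
  obtain ⟨p⟩ := h
  induction p with
  | nil => exact ha
  | cons hadj _ ih => exact ih (hP _ _ ((fromEdgeSet_adj s).mp hadj).1 ha)

lemma reachable_fromEdgeSet_filter_component {F : Finset (Sym2 V)} {r x : V}
    (h : (fromEdgeSet ↑F).Reachable r x) :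
    (fromEdgeSet ↑(F.filter fun e => ∀ y ∈ e, (fromEdgeSet ↑F).Reachable r y)).Reachable
      r x := by
  refine (h.fromEdgeSet_induction (P := fun y => (fromEdgeSet ↑F).Reachable r y ∧ _)
    (fun a b hab ⟨hra, hra'⟩ => ?_) ⟨Reachable.refl r, Reachable.refl r⟩).2
  have hrb := hra.trans (fromEdgeSet_reachable_of_mem hab)
  refine ⟨hrb, hra'.trans (fromEdgeSet_reachable_of_mem ?_)⟩
  simp only [coe_filter, Set.mem_ofPred_eq, Sym2.mem_iff, forall_eq_or_imp, forall_eq]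
  exact ⟨hab, hra, hrb⟩

lemma exists_walk_splice [DecidableEq V] {a b u : V} (W : G.Walk a b) (hu : u ∈ W.support)
    (D : G.Walk u u) :
    ∃ W' : G.Walk a b, W.support ⊆ W'.support ∧ D.support ⊆ W'.support ∧
      walkWeight w W' = walkWeight w W + walkWeight w D := by
  refine ⟨(W.takeUntil u hu).append (D.append (W.dropUntil u hu)), ?_, ?_, ?_⟩
  · intro x hx
    rw [← W.take_spec hu, Walk.mem_support_append_iff] at hx
    simp only [Walk.mem_support_append_iff]
    tauto
  · intro x hx
    simp [Walk.mem_support_append_iff, hx]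
  · conv_rhs => rw [← W.take_spec hu]
    simp only [walkWeight_append]
    ring

def ExistsCoveringTour (G : SimpleGraph V) (w : Sym2 V → ℝ) (F : Finset (Sym2 V)) (r : V) :
    Prop :=
  ∃ W : G.Walk r r, (∀ x, (fromEdgeSet ↑F).Reachable r x → x ∈ W.support) ∧
    walkWeight w W ≤ 2 * ∑ e ∈ F, w e

-- `uv` separates `r` from `v` in `F`: the components of `r` and `v` in `F \ {uv}` have disjoint
-- edge sets, and their tours are joined by crossing `uv` twice.
lemma existsCoveringTour_of_cut (hw : ∀ e, 0 ≤ w e) {F : Finset (Sym2 V)} {r u v : V}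
    (huv : G.Adj u v) (he : s(u, v) ∈ F)
    (ih : ∀ F' ⊂ F, ∀ r, ExistsCoveringTour G w F' r)
    (hru : (fromEdgeSet ↑(F.erase s(u, v))).Reachable r u)
    (hrv : ¬ (fromEdgeSet ↑(F.erase s(u, v))).Reachable r v) :
    ExistsCoveringTour G w F r := by
  set F' := F.erase s(u, v)
  set R := fun a b => (fromEdgeSet (F' : Set (Sym2 V))).Reachable a b
  have hsub : ∀ x, F'.filter (fun e => ∀ y ∈ e, R x y) ⊂ F := fun x =>
    (filter_subset _ _).trans_ssubset (erase_ssubset he)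
  obtain ⟨W₁, hW₁, hw₁⟩ := ih _ (hsub r) r
  obtain ⟨W₂, hW₂, hw₂⟩ := ih _ (hsub v) v
  have hu : u ∈ W₁.support := hW₁ u (reachable_fromEdgeSet_filter_component hru)
  obtain ⟨W, h₁, h₂, hW⟩ := exists_walk_splice (w := w) W₁ hu
    (Walk.cons huv (W₂.append (Walk.cons huv.symm Walk.nil)))
  refine ⟨W, fun x hx => ?_, ?_⟩
  · have : R r x ∨ R v x := by
      refine hx.fromEdgeSet_induction (P := fun y => R r y ∨ R v y) (fun a b hab h => ?_)
        (Or.inl (Reachable.refl r))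
      by_cases hab' : s(a, b) = s(u, v)
      · rcases Sym2.eq_iff.mp hab' with ⟨-, rfl⟩ | ⟨-, rfl⟩
        · exact Or.inr (Reachable.refl _)
        · exact Or.inl hru
      · have := fromEdgeSet_reachable_of_mem (mem_coe.mpr (mem_erase.mpr ⟨hab', hab⟩))
        exact h.imp (·.trans this) (·.trans this)
    rcases this with h | h
    · exact h₁ (hW₁ x (reachable_fromEdgeSet_filter_component h))
    · exact h₂ (by simp [hW₂ x (reachable_fromEdgeSet_filter_component h)])
  · have hdisj : Disjoint (F'.filter fun e => ∀ y ∈ e, R r y)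
        (F'.filter fun e => ∀ y ∈ e, R v y) := by
      refine disjoint_filter.mpr fun e _ hr hv => ?_
      obtain ⟨a, b⟩ := e
      exact hrv ((hr a (Sym2.mem_mk_left a b)).trans (hv a (Sym2.mem_mk_left a b)).symm)
    have hsum := sum_le_sum_of_subset_of_nonneg (f := w)
      (union_subset (filter_subset (fun e => ∀ y ∈ e, R r y) F')
        (filter_subset (fun e => ∀ y ∈ e, R v y) F')) fun e _ _ => hw e
    rw [sum_union hdisj] at hsum
    have hF := sum_erase_add F w he
    have hvu : w s(v, u) = w s(u, v) := by rw [Sym2.eq_swap]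
    simp only [hW, walkWeight_cons, walkWeight_append, walkWeight_nil, hvu] at hw₁ hw₂ ⊢
    linarith

lemma existsCoveringTour (hw : ∀ e, 0 ≤ w e) (F : Finset (Sym2 V))
    (hF : ∀ e ∈ F, e ∈ G.edgeSet) (r : V) : ExistsCoveringTour G w F r := by
  induction F using Finset.strongInduction generalizing r with
  | H F ih =>
    rcases F.eq_empty_or_nonempty with rfl | ⟨⟨u, v⟩, he : s(u, v) ∈ F⟩
    · exact ⟨Walk.nil, fun x hx => by simp_all [reachable_bot], by simp⟩
    have ih' : ∀ F' ⊂ F, ∀ r, ExistsCoveringTour G w F' r := fun F' hF' =>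
      ih F' hF' fun e he => hF e (hF'.subset he)
    have huv : G.Adj u v := hF _ he
    set R := fun a b => (fromEdgeSet (↑(F.erase s(u, v)) : Set (Sym2 V))).Reachable a b
    by_cases hiff : R r u ↔ R r v
    · obtain ⟨W, hW, hwW⟩ := ih' _ (erase_ssubset he) r
      refine ⟨W, fun x hx => hW x ?_, hwW.trans ?_⟩
      · refine hx.fromEdgeSet_induction (fun a b hab h => ?_) (Reachable.refl r)
        by_cases hab' : s(a, b) = s(u, v)
        · rcases Sym2.eq_iff.mp hab' with ⟨rfl, rfl⟩ | ⟨rfl, rfl⟩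
          exacts [hiff.mp h, hiff.mpr h]
        · exact h.trans (fromEdgeSet_reachable_of_mem (mem_erase.mpr ⟨hab', hab⟩))
      · linarith [sum_erase_add F w he, hw s(u, v)]
    by_cases hu : R r u
    · exact existsCoveringTour_of_cut hw huv he ih' hu
        fun hv => hiff ⟨fun _ => hv, fun _ => hu⟩
    · have hv : R r v := by tauto
      rw [Sym2.eq_swap] at he
      exact existsCoveringTour_of_cut hw huv.symm he ih' (by rwa [Sym2.eq_swap])
        (by rwa [Sym2.eq_swap])

lemma exists_cycle_of_closed_walk [DecidableEq V] (hw : ∀ e, 0 ≤ w e) {t₀ : V}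
    (W : G.Walk t₀ t₀) (T : Finset V) (hT : ∀ t ∈ T, t ∈ W.support) :
    ∃ l : List V, (t₀ :: l).Nodup ∧ (t₀ :: l).toFinset = insert t₀ T ∧
      pathCost (walkDist G w) (t₀ :: l ++ [t₀]) ≤ walkWeight w W := by
  set l := (W.support.tail.filter (· ∈ T.erase t₀)).dedup
  have hmem : ∀ x, x ∈ l ↔ x ∈ W.support.tail ∧ x ≠ t₀ ∧ x ∈ T := by
    simp [l, List.mem_dedup, List.mem_filter]
  refine ⟨l, List.nodup_cons.mpr ⟨fun h => ((hmem _).mp h).2.1 rfl, List.nodup_dedup _⟩,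
    ?_, ?_⟩
  · ext x
    simp only [List.toFinset_cons, mem_insert, List.mem_toFinset, hmem]
    have := hT x
    rw [← W.cons_tail_support, List.mem_cons] at this
    tauto
  · calc pathCost (walkDist G w) (t₀ :: l ++ [t₀])
        ≤ pathCost (walkDist G w) (t₀ :: W.support.tail ++ [t₀]) :=
          pathCost_le_of_sublist hw ((List.dedup_sublist _).trans List.filter_sublist) t₀
            fun x hx => (W.takeUntil x (List.mem_of_mem_tail hx)).reachable
      _ = pathCost (walkDist G w) (W.support ++ [t₀]) := by rw [W.cons_tail_support]
      _ ≤ walkWeight w W := pathCost_support_append_le hw W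

lemma Function.Periodic.sum_range_add {c : ℕ → ℝ} {k : ℕ} (hc : Function.Periodic c k)
    (a : ℕ) : ∑ n ∈ range k, c (a + n) = ∑ n ∈ range k, c n := by
  induction a with
  | zero => simp
  | succ a ih =>
    have h := sum_range_succ' (fun n => c (a + n)) k
    rw [sum_range_succ, ih, hc a, add_zero] at h
    simp only [show ∀ n, a + 1 + n = a + (n + 1) by omega]
    linarith

lemma Function.Periodic.exists_sum_range_shift_le {c : ℕ → ℝ} {k : ℕ}
    (hc : Function.Periodic c k) (hk : 0 < k) :
    ∃ m < k, ∑ n ∈ range (k - 1), c (m + 1 + n) ≤ (1 - 1 / k) * ∑ n ∈ range k, c n := by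
  obtain ⟨m, hm, hmax⟩ := exists_max_image (range k) c ⟨0, mem_range.mpr hk⟩
  refine ⟨m, mem_range.mp hm, ?_⟩
  have hsplit : ∑ n ∈ range (k - 1), c (m + 1 + n) + c m = ∑ n ∈ range k, c n := by
    obtain ⟨j, rfl⟩ : ∃ j, k = j + 1 := ⟨k - 1, by omega⟩
    rw [← hc.sum_range_add (m + 1), sum_range_succ, Nat.add_sub_cancel,
      show m + 1 + j = m + (j + 1) by ring, hc m]
  have hmean : (∑ n ∈ range k, c n) / k ≤ c m := by
    rw [div_le_iff₀ (by exact_mod_cast hk)]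
    simpa [mul_comm] using sum_le_card_nsmul (range k) c (c m) hmax
  rw [sub_mul, one_mul, one_div_mul_eq_div]
  linarith

lemma exists_path_of_cycle (d : V → V → ℝ) (a : V) (l : List V) :
    ∃ g : ℕ → V, (∀ n, g n ∈ a :: l) ∧
      (∀ x ∈ a :: l, ∃ n ≤ l.length, g n = x) ∧
      ∑ n ∈ range l.length, d (g n) (g (n + 1)) ≤
        (1 - 1 / (l.length + 1 : ℕ)) * pathCost d (a :: l ++ [a]) := by
  set k := l.length + 1
  set f : ℕ → V := fun n => (a :: l).getD (n % k) a
  have hf : Function.Periodic f k := fun n => by simp [f]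
  have hfl : ∀ n (hn : n < k), f n = (a :: l)[n]'hn := fun n hn => by
    simp only [f, Nat.mod_eq_of_lt hn]
    exact List.getD_eq_getElem _ _ _
  have hcycle : ∑ n ∈ range k, d (f n) (f (n + 1)) = pathCost d (a :: l ++ [a]) := by
    have hget : ∀ n ≤ k, (a :: l ++ [a]).getD n a = f n := by
      intro n hn
      rcases hn.lt_or_eq with hn | rfl
      · rw [List.getD_append _ _ _ _ hn, hfl n hn, List.getD_eq_getElem]
      · simp [f, k]
    rw [pathCost_eq_sum d a]
    refine sum_congr (by simp [k]) fun n hn => ?_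
    rw [hget n (by simp at hn; omega), hget (n + 1) (by simp at hn; omega)]
  obtain ⟨m, hm, hsum⟩ := (show Function.Periodic (fun n => d (f n) (f (n + 1))) k from
    fun n => by simp only [add_right_comm n k 1, hf _]).exists_sum_range_shift_le
      (Nat.succ_pos _)
  refine ⟨fun n => f (m + 1 + n), fun n => ?_, fun x hx => ?_, ?_⟩
  · show f (m + 1 + n) ∈ _
    rw [← hf.map_mod_nat, hfl _ (Nat.mod_lt _ (Nat.succ_pos _))]
    exact List.getElem_mem _
  · obtain ⟨j, hj, rfl⟩ := List.mem_iff_getElem.mp hx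
    rw [← hfl j hj]
    by_cases hmj : m + 1 ≤ j
    · exact ⟨j - (m + 1), by simp at hj; omega, by simp only; congr 1; omega⟩
    · refine ⟨j + k - (m + 1), by simp [k] at hj ⊢; omega, ?_⟩
      simp only
      rw [show m + 1 + (j + k - (m + 1)) = j + k by omega, hf]
  · simpa [k, hcycle, add_assoc] using hsum

lemma card_image_range_le_card_filter_ne {α : Type*} [DecidableEq α] (ρ : ℕ → α) (N : ℕ) :
    #((range (N + 1)).image ρ) ≤ #((range N).filter fun n => ρ n ≠ ρ (n + 1)) + 1 := by
  induction N with
  | zero => simp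
  | succ N ih =>
    rw [range_add_one (n := N + 1), image_insert]
    conv_rhs => rw [range_add_one, filter_insert]
    by_cases h : ρ N = ρ (N + 1)
    · rw [insert_eq_of_mem (mem_image.mpr ⟨N, self_mem_range_succ N, h⟩),
        if_neg (not_not.mpr h)]
      exact ih
    · rw [if_pos h, card_insert_of_notMem (a := N) (by simp)]
      linarith [card_insert_le (ρ (N + 1)) ((range (N + 1)).image ρ)]

lemma card_le_card_biUnion_crossing {K N : ℕ} (t : ℕ → ℕ) (h0 : ∃ n ≤ N, t n = 0)
    (hnew : ∀ i : Fin K, ∃ n ≤ N, t n = i + 1) (s : Finset (Fin K)) :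
    #s ≤ #(s.biUnion fun i => (range N).filter fun n => ¬(t n ≤ i ↔ t (n + 1) ≤ i)) := by
  set ρ : ℕ → ℕ := fun n => #(s.filter fun i : Fin K => (i : ℕ) < t n)
  set σ : Fin K → ℕ := fun i => #(s.filter fun j : Fin K => (j : ℕ) < i + 1)
  have hσ : StrictMonoOn σ s := fun i _ j hj hij => by
    refine card_lt_card ⟨fun x hx => ?_, ?_⟩
    · rw [Fin.lt_def] at hij
      simp only [mem_filter] at hx ⊢
      exact ⟨hx.1, by omega⟩
    · intro h
      have := (mem_filter.mp (h (mem_filter.mpr ⟨hj, Nat.lt_succ_self _⟩))).2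
      rw [Fin.lt_def] at hij
      omega
  have hσ0 : 0 ∉ s.image σ := by
    simp only [mem_image, not_exists, not_and]
    intro i hi h
    have : 0 < σ i := card_pos.mpr ⟨i, mem_filter.mpr ⟨hi, Nat.lt_succ_self _⟩⟩
    omega
  have hvals : insert 0 (s.image σ) ⊆ (range (N + 1)).image ρ := by
    intro x hx
    rcases mem_insert.mp hx with rfl | hx
    · obtain ⟨n, hn, ht⟩ := h0
      exact mem_image.mpr ⟨n, mem_range.mpr (by omega), by simp [ρ, ht]⟩
    · obtain ⟨i, -, rfl⟩ := mem_image.mp hx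
      obtain ⟨n, hn, ht⟩ := hnew i
      exact mem_image.mpr ⟨n, mem_range.mpr (by omega), by simp [ρ, σ, ht]⟩
  have hchanges : (range N).filter (fun n => ρ n ≠ ρ (n + 1)) ⊆
      s.biUnion fun i => (range N).filter fun n => ¬(t n ≤ i ↔ t (n + 1) ≤ i) := by
    intro n hn
    obtain ⟨hnN, hne⟩ := mem_filter.mp hn
    simp only [mem_biUnion, mem_filter]
    by_contra! h
    refine hne (congrArg card (filter_congr fun (i : Fin K) hi => ?_))
    have := h i hi hnN
    omega
  have := card_image_range_le_card_filter_ne ρ N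
  have := card_le_card hvals
  have := card_le_card hchanges
  rw [card_insert_of_notMem hσ0, card_image_of_injOn hσ.injOn] at *
  omega

lemma exists_injective_crossing {K N : ℕ} (t : ℕ → ℕ) (h0 : ∃ n ≤ N, t n = 0)
    (hnew : ∀ i : Fin K, ∃ n ≤ N, t n = i + 1) :
    ∃ φ : Fin K → ℕ, Function.Injective φ ∧
      ∀ i, φ i < N ∧ ¬(t (φ i) ≤ i ↔ t (φ i + 1) ≤ i) := by
  obtain ⟨φ, hφ, hmem⟩ := (all_card_le_biUnion_card_iff_exists_injective _).mp
    (card_le_card_biUnion_crossing t h0 hnew)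
  exact ⟨φ, hφ, fun i => by simpa using hmem i⟩

lemma le_add_sum_of_succ_le_add {K : ℕ} (u : ℕ → ℝ) (a : Fin K → ℝ)
    (h : ∀ i : Fin K, u (i + 1) ≤ u i + a i) : u K ≤ u 0 + ∑ i, a i := by
  induction K with
  | zero => simp
  | succ K ih =>
    have := ih (fun i => a i.castSucc) fun i => h i.castSucc
    have := h (Fin.last K)
    simp only [Fin.sum_univ_castSucc, Fin.val_last] at *
    linarith

lemma mem_iff_sInf_le {A : ℕ → Set V} {K : ℕ} (hA : ∀ i < K, A i ⊆ A (i + 1)) {x : V}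
    (hx : x ∈ A K) {i : ℕ} (hi : i ≤ K) : x ∈ A i ↔ sInf {j | x ∈ A j} ≤ i := by
  have hmono : ∀ a b, a ≤ b → b ≤ K → A a ⊆ A b := by
    intro a b hab
    induction b, hab using Nat.le_induction with
    | base => exact fun _ => subset_rfl
    | succ b _ ih => exact fun hb => (ih (by omega)).trans (hA b (by omega))
  exact ⟨fun h => Nat.sInf_le h,
    fun h => hmono _ _ h hi (Nat.sInf_mem (s := {j | x ∈ A j}) ⟨K, hx⟩)⟩

section SubgraphWeight

variable [Fintype V] [DecidableEq V]

lemma subgraphWeight_sup_le (hw : ∀ e, 0 ≤ w e) (S₁ S₂ : G.Subgraph) :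
    subgraphWeight w (S₁ ⊔ S₂) ≤ subgraphWeight w S₁ + subgraphWeight w S₂ := by
  simp only [subgraphWeight, Subgraph.edgeSet_sup, Set.mem_union, filter_or]
  rw [← sum_union_inter]
  exact le_add_of_nonneg_right (sum_nonneg fun e _ => hw e)

lemma subgraphWeight_toSubgraph_le (hw : ∀ e, 0 ≤ w e) {x y : V} (p : G.Walk x y) :
    subgraphWeight w p.toSubgraph ≤ walkWeight w p := by
  have hset : univ.filter (· ∈ p.toSubgraph.edgeSet) = p.edges.toFinset := by
    ext e
    simp [Walk.edgeSet_toSubgraph]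
  rw [subgraphWeight, hset, walkWeight, sum_list_map_count]
  refine sum_le_sum fun e he => ?_
  rw [nsmul_eq_mul]
  exact le_mul_of_one_le_left (hw e)
    (by exact_mod_cast List.count_pos_iff.mpr (List.mem_toFinset.mp he))

lemma subgraphWeight_singletonSubgraph (v : V) :
    subgraphWeight w (G.singletonSubgraph v) = 0 := by
  simp [subgraphWeight, edgeSet_singletonSubgraph]

end SubgraphWeight

section GreedyRun

variable {H : ℕ → G.Subgraph} {K : ℕ} {d v : Fin K → V} {p : ∀ i, G.Walk (d i) (v i)}

lemma sum_walkWeight_le_sum_walkDist (hw : ∀ e, 0 ≤ w e) {T : Finset V} {t₀ : V}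
    (ht₀ : t₀ ∈ T) (h0 : t₀ ∈ (H 0).verts) (hterm : ↑T ⊆ (H K).verts)
    (hdT : ∀ i, d i ∈ T) (hdH : ∀ i : Fin K, d i ∉ (H i).verts)
    (hmin : ∀ (i : Fin K) (d' v' : V) (q : G.Walk d' v'), d' ∈ T → d' ∉ (H i).verts →
      v' ∈ (H i).verts → walkWeight w (p i) ≤ walkWeight w q)
    (hrec : ∀ i : Fin K, H (i + 1) = H i ⊔ (p i).toSubgraph)
    {g : ℕ → V} {N : ℕ} (hgT : ∀ n, g n ∈ T) (hTg : ∀ t ∈ T, ∃ n ≤ N, g n = t)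
    (hreach : ∀ n < N, G.Reachable (g n) (g (n + 1))) :
    ∑ i, walkWeight w (p i) ≤ ∑ n ∈ range N, walkDist G w (g n) (g (n + 1)) := by
  set τ : V → ℕ := fun x => sInf {j | x ∈ (H j).verts}
  have hτ : ∀ x ∈ T, ∀ i ≤ K, x ∈ (H i).verts ↔ τ x ≤ i := fun x hx i hi =>
    mem_iff_sInf_le (A := fun j => (H j).verts) (fun j hj => by simp [hrec ⟨j, hj⟩])
      (hterm hx) hi
  have hτd : ∀ i, τ (d i) = i + 1 := fun i => by
    have h₁ := (hτ _ (hdT i) (i + 1) i.2).mp (by simp [hrec i])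
    have h₂ := mt (hτ _ (hdT i) i i.2.le).mpr (hdH i)
    omega
  obtain ⟨φ, hφ, hcross⟩ := exists_injective_crossing (fun n => τ (g n)) (N := N)
    (by
      obtain ⟨n, hn, hgn⟩ := hTg t₀ ht₀
      exact ⟨n, hn, Nat.le_zero.mp (hgn ▸ Nat.sInf_le h0)⟩)
    fun i => by
      obtain ⟨n, hn, hgn⟩ := hTg (d i) (hdT i)
      exact ⟨n, hn, by simp only [hgn, hτd]⟩
  have hseg : ∀ i, walkWeight w (p i) ≤ walkDist G w (g (φ i)) (g (φ i + 1)) := fun i => by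
    obtain ⟨hφN, hc⟩ := hcross i
    rw [← hτ _ (hgT _) i i.2.le, ← hτ _ (hgT _) i i.2.le] at hc
    refine le_walkDist (hreach _ hφN) fun q => ?_
    by_cases h : g (φ i) ∈ (H i).verts
    · simpa using hmin i _ _ q.reverse (hgT _) (fun h' => hc ⟨fun _ => h', fun _ => h⟩) h
    · exact hmin i _ _ q (hgT _) h (by tauto)
  calc ∑ i, walkWeight w (p i) ≤ ∑ i, walkDist G w (g (φ i)) (g (φ i + 1)) :=
        sum_le_sum fun i _ => hseg i
    _ = ∑ n ∈ univ.image φ, walkDist G w (g n) (g (n + 1)) :=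
        (sum_image (f := fun n => walkDist G w (g n) (g (n + 1))) hφ.injOn).symm
    _ ≤ ∑ n ∈ range N, walkDist G w (g n) (g (n + 1)) :=
        sum_le_sum_of_subset_of_nonneg (by simpa [subset_iff] using fun i => (hcross i).1)
          fun _ _ _ => walkDist_nonneg hw _ _

lemma subgraphWeight_le_add_sum_walkWeight [Fintype V] [DecidableEq V] (hw : ∀ e, 0 ≤ w e)
    (hrec : ∀ i : Fin K, H (i + 1) = H i ⊔ (p i).toSubgraph) :
    subgraphWeight w (H K) ≤ subgraphWeight w (H 0) + ∑ i, walkWeight w (p i) :=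
  le_add_sum_of_succ_le_add (fun j => subgraphWeight w (H j)) _ fun i => by
    show subgraphWeight w (H (i + 1)) ≤ subgraphWeight w (H i) + walkWeight w (p i)
    rw [hrec i]
    exact (subgraphWeight_sup_le hw _ _).trans
      (add_le_add le_rfl (subgraphWeight_toSubgraph_le hw (p i)))

end GreedyRun

lemma exists_terminal_path [Fintype V] [DecidableEq V] (hw : ∀ e, 0 ≤ w e) {S : G.Subgraph}
    (hS : S.Connected) {T : Finset V} (hTS : ↑T ⊆ S.verts) {t₀ : V} (ht₀ : t₀ ∈ T) :
    ∃ g : ℕ → V, (∀ n, g n ∈ T) ∧ (∀ t ∈ T, ∃ n ≤ #T - 1, g n = t) ∧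
      ∑ n ∈ range (#T - 1), walkDist G w (g n) (g (n + 1)) ≤
        (2 - 2 / #T) * subgraphWeight w S := by
  set F := univ.filter (· ∈ S.edgeSet)
  let toF : S.coe →g fromEdgeSet ↑F := ⟨Subtype.val, fun {a b} h =>
    (fromEdgeSet_adj _).mpr ⟨by simpa [F] using h, fun hab => h.ne (Subtype.ext hab)⟩⟩
  obtain ⟨W, hWcov, hWw⟩ :=
    existsCoveringTour hw F (fun e he => S.edgeSet_subset (by simpa [F] using he)) t₀
  obtain ⟨l, hnd, hl, hcost⟩ := exists_cycle_of_closed_walk hw W T fun t ht =>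
    hWcov t ((hS.preconnected ⟨t₀, hTS ht₀⟩ ⟨t, hTS ht⟩).map toF)
  rw [insert_eq_of_mem ht₀] at hl
  have hk : l.length + 1 = #T := by rw [← hl, List.toFinset_card_of_nodup hnd, List.length_cons]
  obtain ⟨g, hgl, hlg, hsum⟩ := exists_path_of_cycle (walkDist G w) t₀ l
  refine ⟨g, fun n => hl ▸ List.mem_toFinset.mpr (hgl n), fun t ht => ?_, ?_⟩
  · simpa [← hk] using hlg t (List.mem_toFinset.mp (hl ▸ ht))
  · have hk' : (0 : ℝ) ≤ 1 - 1 / #T :=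
      sub_nonneg.mpr <|
        div_le_one_of_le₀ (by exact_mod_cast card_pos.mpr ⟨t₀, ht₀⟩) (by positivity)
    calc ∑ n ∈ range (#T - 1), walkDist G w (g n) (g (n + 1))
        ≤ (1 - 1 / #T) * pathCost (walkDist G w) (t₀ :: l ++ [t₀]) := by
          simpa [← hk] using hsum
      _ ≤ (1 - 1 / #T) * (2 * subgraphWeight w S) :=
          mul_le_mul_of_nonneg_left (hcost.trans hWw) hk'
      _ = (2 - 2 / #T) * subgraphWeight w S := by ring

end

theorem stmt_13_general {V : Type*} [Fintype V] [DecidableEq V] (G : SimpleGraph V)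
    (w : Sym2 V → ℝ) (hw : ∀ e, 0 ≤ w e)
    (terminals : Finset V)
    (t₀ : V) (ht₀ : t₀ ∈ terminals)
    (H : ℕ → G.Subgraph)
    (h0 : H 0 = SimpleGraph.singletonSubgraph G t₀)
    (K : ℕ)
    (hstep : ∀ k < K, ∃ (d v : V) (p : G.Walk d v),
        d ∈ terminals ∧ d ∉ (H k).verts ∧ v ∈ (H k).verts ∧
        (∀ (d' v' : V) (p' : G.Walk d' v'),
          d' ∈ terminals → d' ∉ (H k).verts → v' ∈ (H k).verts →
          walkWeight w p ≤ walkWeight w p') ∧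
        H (k + 1) = H k ⊔ p.toSubgraph)
    (hterm : ↑terminals ⊆ (H K).verts)
    (opt : ℝ)
    (hopt : IsLeast {c : ℝ | ∃ S : G.Subgraph, S.Connected ∧ ↑terminals ⊆ S.verts ∧
        c = subgraphWeight w S} opt) :
    subgraphWeight w (H K) ≤ (2 - 2 / terminals.card) * opt := by
  obtain ⟨⟨S, hS, hTS, rfl⟩, -⟩ := hopt
  obtain ⟨g, hgT, hTg, hcost⟩ := exists_terminal_path hw hS hTS ht₀
  have hreach : ∀ n < #terminals - 1, G.Reachable (g n) (g (n + 1)) := fun n _ =>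
    (hS.preconnected ⟨_, hTS (hgT n)⟩ ⟨_, hTS (hgT (n + 1))⟩).map S.hom
  choose d v p hdT hdH _ hmin hrec using fun i : Fin K => hstep i i.2
  calc subgraphWeight w (H K) ≤ ∑ i, walkWeight w (p i) := by
        simpa [h0, subgraphWeight_singletonSubgraph] using
          subgraphWeight_le_add_sum_walkWeight hw hrec
    _ ≤ ∑ n ∈ range (#terminals - 1), walkDist G w (g n) (g (n + 1)) :=
        sum_walkWeight_le_sum_walkDist hw ht₀ (by simp [h0]) hterm hdT hdH hmin hrec hgT hTg
          hreach
    _ ≤ _ := hcost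

/-- Takahashi–Matsuyama guarantee: in a graph with nonnegative edge
weights and k ≥ 2 terminals, the greedy procedure that starts from a terminal and
repeatedly attaches a nearest uncovered terminal to the current tree via a
minimum-weight path produces, once all terminals are covered, a tree of weight at
most (2 − 2/k) times the weight of a minimum-weight connected subgraph spanning
the terminals. -/
theorem stmt_13 {V : Type*} [Fintype V] [DecidableEq V] (G : SimpleGraph V)
    (w : Sym2 V → ℝ) (hw : ∀ e, 0 ≤ w e)
    (terminals : Finset V) (hk : 2 ≤ terminals.card)
    (t₀ : V) (ht₀ : t₀ ∈ terminals)
    (H : ℕ → G.Subgraph)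
    (h0 : H 0 = SimpleGraph.singletonSubgraph G t₀)
    (K : ℕ)
    (hstep : ∀ k < K, ∃ (d v : V) (p : G.Walk d v),
        d ∈ terminals ∧ d ∉ (H k).verts ∧ v ∈ (H k).verts ∧
        (∀ (d' v' : V) (p' : G.Walk d' v'),
          d' ∈ terminals → d' ∉ (H k).verts → v' ∈ (H k).verts →
          walkWeight w p ≤ walkWeight w p') ∧
        H (k + 1) = H k ⊔ p.toSubgraph)
    (hterm : ↑terminals ⊆ (H K).verts)
    (opt : ℝ)
    (hopt : IsLeast {c : ℝ | ∃ S : G.Subgraph, S.Connected ∧ ↑terminals ⊆ S.verts ∧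
        c = subgraphWeight w S} opt) :
    subgraphWeight w (H K) ≤ (2 - 2 / terminals.card) * opt :=
  stmt_13_general G w hw terminals t₀ ht₀ H h0 K hstep hterm opt hopt
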